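/- Let (K, δ) be a separably differentially closed field of characteristic p > 0. Then the field of constants C_K is separably closed and has infinite degree of imperfection, i.e. [C_K : C_K^p] is infinite. -/

import Mathlib

set_option synthInstance.maxHeartbeats 1000000
set_option maxHeartbeats 1000000

open MvPolynomial
noncomputable section
variable {K : Type*} [Field K]

/-- order of a differential polynomial -/
def ordOf (f : MvPolynomial ℕ K) : ℕ := f.vars.sup id

/-- separant -/
def sep (f : MvPolynomial ℕ K) : MvPolynomial ℕ K := pderiv (ordOf f) f

/-- rank of a differential polynomial -/
def rankOf (f : MvPolynomial ℕ K) : ℕ × ℕ := (ordOf f, f.degreeOf (ordOf f))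

/-- the differential ideal generated by f -/
def diffIdeal (D : Derivation ℤ (MvPolynomial ℕ K) (MvPolynomial ℕ K))
    (f : MvPolynomial ℕ K) : Ideal (MvPolynomial ℕ K) :=
  Ideal.span (Set.range fun n : ℕ => (⇑D)^[n] f)

/-- saturation I : s^∞ -/
def saturation {R : Type*} [CommRing R] (J : Ideal R) (s : R) : Ideal R where
  carrier := {h | ∃ m : ℕ, s ^ m * h ∈ J}
  zero_mem' := ⟨0, by simp⟩
  add_mem' := by
    rintro a b ⟨m, hm⟩ ⟨n, hn⟩
    refine ⟨m + n, ?_⟩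
    have h : s ^ (m + n) * (a + b) = s ^ n * (s ^ m * a) + s ^ m * (s ^ n * b) := by ring
    rw [h]
    exact J.add_mem (J.mul_mem_left _ hm) (J.mul_mem_left _ hn)
  smul_mem' := by
    rintro c a ⟨m, hm⟩
    refine ⟨m, ?_⟩
    have h : s ^ m * (c • a) = c * (s ^ m * a) := by rw [smul_eq_mul]; ring
    rw [h]
    exact J.mul_mem_left _ hm

/-- evaluation of a differential polynomial at a point of K -/
def evalD (δ : Derivation ℤ K K) (a : K) (f : MvPolynomial ℕ K) : K :=
  MvPolynomial.eval (fun n => (⇑δ)^[n] a) f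

/-- the field of constants -/
def constants (δ : Derivation ℤ K K) : Subfield K where
  carrier := {a | δ a = 0}
  zero_mem' := by simp
  one_mem' := by simp
  add_mem' := by intro a b ha hb; simp only [Set.mem_setOf_eq] at *; rw [map_add, ha, hb, add_zero]
  mul_mem' := by
    intro a b ha hb; simp only [Set.mem_setOf_eq] at *
    rw [Derivation.leibniz, ha, hb]; simp
  neg_mem' := by intro a ha; simp only [Set.mem_setOf_eq] at *; rw [map_neg, ha, neg_zero]
  inv_mem' := by
    intro a ha
    simp only [Set.mem_setOf_eq] at *
    rcases eq_or_ne a 0 with rfl | h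
    · simp
    · have h1 : a * a⁻¹ = 1 := mul_inv_cancel₀ h
      have h2 : δ (a * a⁻¹) = 0 := by rw [h1]; exact δ.map_one_eq_zero
      rw [Derivation.leibniz, ha] at h2
      simp only [smul_eq_mul, mul_zero, add_zero, zero_mul, smul_zero] at h2
      exact (mul_eq_zero.mp h2).resolve_left h

/-- the SDCF axiom scheme -/
def SDCFAx (δ : Derivation ℤ K K) : Prop :=
  ∀ f g : MvPolynomial ℕ K, f ≠ 0 → g ≠ 0 → sep f ≠ 0 → ordOf g < ordOf f →
    ∃ a : K, evalD δ a f = 0 ∧ evalD δ a g ≠ 0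

/-!
Let `P` be a monic irreducible separable polynomial over `C_K`. The axiom applied to `P(x')`
and `1` gives `a` with `P(δ a) = 0`; differentiating `P(b) = 0` gives `P'(b) δ b = 0`, so the
separable root `b = δ a` is a constant.

For the imperfection degree, if `W(v₁, …, vₙ) ≠ 0` then `W(v₁, …, vₙ, x)` is a nonzero
differential polynomial of order `n`, and applying the axiom to `x⁽ⁿ⁺¹⁾` and it yields `a`
with `W(v₁, …, vₙ, a) ≠ 0`. Families with nonzero Wronskian are linearly independent over
`C_K`, and since `K^p ⊆ C_K` and Frobenius is injective, `v ↦ v^p` turns them into families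
in `C_K` that are linearly independent over `C_K^p`.
-/

theorem ordOf_le_of_mem_supported {f : MvPolynomial ℕ K} {n : ℕ}
    (hf : f ∈ supported K (Set.Iic n)) : ordOf f ≤ n :=
  Finset.sup_le fun _ hi => mem_supported.mp hf hi

theorem ordOf_eq_of_mem_supported {f : MvPolynomial ℕ K} {n : ℕ}
    (hf : f ∈ supported K (Set.Iic n)) (hn : pderiv n f ≠ 0) : ordOf f = n :=
  (ordOf_le_of_mem_supported hf).antisymm <|
    Finset.le_sup (f := id) (not_not.mp fun h => hn (pderiv_eq_zero_of_notMem_vars h))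

theorem SDCFAx.exists_eval_eq_zero_and_ne_zero {δ : Derivation ℤ K K} (h : SDCFAx δ)
    {f g : MvPolynomial ℕ K} {n : ℕ} (hf : f ∈ supported K (Set.Iic (n + 1)))
    (hsep : pderiv (n + 1) f ≠ 0) (hg : g ∈ supported K (Set.Iic n)) (hg0 : g ≠ 0) :
    ∃ a : K, evalD δ a f = 0 ∧ evalD δ a g ≠ 0 := by
  have hord := ordOf_eq_of_mem_supported hf hsep
  refine h f g (fun hf0 => hsep (by simp [hf0])) hg0 (by rwa [sep, hord]) ?_
  exact hord ▸ Nat.lt_succ_of_le (ordOf_le_of_mem_supported hg)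

theorem mem_constants_of_aeval_eq_zero {δ : Derivation ℤ K K} {P : Polynomial (constants δ)}
    (hP : P.Separable) {b : K} (hb : Polynomial.aeval b P = 0) : b ∈ constants δ := by
  have hP' : (δ.compAlgebraMap (constants δ)).mapCoeffs P = 0 := by
    ext i; exact (P.coeff i).2
  have h := δ.apply_aeval_eq b P
  rw [hP', hb, map_zero, map_zero, map_zero, zero_add, smul_eq_mul, eq_comm] at h
  exact (mul_eq_zero.mp h).resolve_left (hP.aeval_derivative_ne_zero hb)

theorem evalD_aeval_X (δ : Derivation ℤ K K) (a : K) (i : ℕ) (Q : Polynomial K) :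
    evalD δ a (Polynomial.aeval (X i) Q) = Q.eval ((⇑δ)^[i] a) := by
  rw [evalD, ← coe_aeval_eq_eval, AlgHom.coe_toRingHom, ← Polynomial.aeval_algHom_apply,
    aeval_X, Polynomial.coe_aeval_eq_eval]

theorem aeval_X_mem_supported (i : ℕ) (Q : Polynomial K) :
    Polynomial.aeval (X i) Q ∈ supported K (Set.Iic i) :=
  Algebra.adjoin_mono (by simp) (Polynomial.aeval_mem_adjoin_singleton K (X i))

theorem pderiv_aeval_X_ne_zero {i : ℕ} {Q : Polynomial K} (hQ : Q.derivative ≠ 0) :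
    pderiv i (Polynomial.aeval (X i : MvPolynomial ℕ K) Q) ≠ 0 := by
  rw [Derivation.map_aeval, pderiv_X_self (R := K), smul_eq_mul, mul_one]
  exact fun h => hQ <|
    transcendental_iff_injective.mp (transcendental_X K i) (h.trans (map_zero _).symm)

theorem isSepClosed_constants {δ : Derivation ℤ K K} (h : SDCFAx δ) :
    IsSepClosed (constants δ) := by
  refine IsSepClosed.of_exists_root _ fun P _ hirr hsep => ?_
  set Q := P.map (algebraMap (constants δ) K)
  have hQ : Q.derivative ≠ 0 := by
    rw [Polynomial.derivative_map]
    exact (Polynomial.map_ne_zero_iff (algebraMap (constants δ) K).injective).mpr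
      ((Polynomial.separable_iff_derivative_ne_zero hirr).mp hsep)
  obtain ⟨a, ha, -⟩ := h.exists_eval_eq_zero_and_ne_zero (n := 0) (aeval_X_mem_supported 1 Q)
    (pderiv_aeval_X_ne_zero hQ) (one_mem _) one_ne_zero
  rw [evalD_aeval_X, Function.iterate_one, Polynomial.eval_map_algebraMap] at ha
  refine ⟨⟨δ a, mem_constants_of_aeval_eq_zero hsep ha⟩, ?_⟩
  apply (algebraMap (constants δ) K).injective
  rw [← Polynomial.coe_aeval_eq_eval, ← Polynomial.aeval_algebraMap_apply, map_zero]
  exact ha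

theorem linearIndependent_frobenius_fieldRange (p : ℕ) [ExpChar K p] {C : Subfield K}
    (hC : ∀ x : K, x ^ p ∈ C) {ι : Type*} {v : ι → K} (hv : LinearIndependent C v) :
    LinearIndependent (frobenius C p).fieldRange fun i => (⟨v i ^ p, hC (v i)⟩ : C) := by
  let root := (RingHom.rangeRestrictFieldEquiv (frobenius C p)).symm
  let pow : K →+ C := (frobenius K p).toAddMonoidHom.codRestrict C hC
  refine hv.map_of_injective_injective root pow (fun r hr => by simpa [root] using hr)
    (fun x hx => ?_) (fun r x => ?_)
  · have : x ^ p = 0 := congrArg Subtype.val hx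
    exact pow_eq_zero_iff (expChar_pos K p).ne' |>.mp this
  · apply Subtype.ext
    have hr : (root r : K) ^ p = r := congrArg Subtype.val (congrArg Subtype.val
      ((RingHom.rangeRestrictFieldEquiv (frobenius C p)).apply_symm_apply r))
    change ((root r : K) * x) ^ p = ((r : C) : K) * x ^ p
    rw [mul_pow, hr]

theorem pow_char_mem_constants (p : ℕ) [CharP K p] (δ : Derivation ℤ K K) (x : K) :
    x ^ p ∈ constants δ := by
  simp [constants, Derivation.leibniz_pow]

def wronskian (δ : Derivation ℤ K K) {n : ℕ} (v : Fin n → K) : Matrix (Fin n) (Fin n) K :=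
  Matrix.of fun i j => (⇑δ)^[i] (v j)

def constantsLinearMap (δ : Derivation ℤ K K) : Module.End (constants δ) K where
  toFun := δ
  map_add' := map_add δ
  map_smul' c x := by
    rw [Algebra.smul_def, Derivation.leibniz, show δ (algebraMap (constants δ) K c) = 0 from c.2]
    simp [Algebra.smul_def]

@[simp]
theorem coe_constantsLinearMap (δ : Derivation ℤ K K) : ⇑(constantsLinearMap δ) = δ := rfl

theorem linearIndependent_of_det_wronskian_ne_zero (δ : Derivation ℤ K K) {n : ℕ}
    {v : Fin n → K} (hdet : (wronskian δ v).det ≠ 0) : LinearIndependent (constants δ) v := by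
  rw [Fintype.linearIndependent_iff]
  intro c hc
  have hW : (wronskian δ v).mulVec (fun j => (c j : K)) = 0 := funext fun i => by
    calc (wronskian δ v).mulVec (fun j => (c j : K)) i
        = ∑ j, (c j : K) * (⇑δ)^[i] (v j) := by
          simp [Matrix.mulVec, dotProduct, wronskian, mul_comm]
      _ = ∑ j, c j • (constantsLinearMap δ ^ (i : ℕ)) (v j) := by
          simp [Module.End.pow_apply, Subfield.smul_def]
      _ = (constantsLinearMap δ ^ (i : ℕ)) (∑ j, c j • v j) := by
          simp only [map_sum, map_smul]
      _ = 0 := by rw [hc, map_zero]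
  exact fun j => Subtype.ext (congrFun (Matrix.eq_zero_of_mulVec_eq_zero hdet hW) j)

/-- The Wronskian `W(v₀, …, vₙ₋₁, x)` as a differential polynomial in `x`. -/
def wronskianDiffPoly (δ : Derivation ℤ K K) {n : ℕ} (v : Fin n → K) : MvPolynomial ℕ K :=
  (Matrix.of fun i j : Fin (n + 1) =>
    Fin.lastCases (X i) (fun j => C ((⇑δ)^[i] (v j))) j).det

theorem evalD_wronskianDiffPoly (δ : Derivation ℤ K K) {n : ℕ} (v : Fin n → K) (a : K) :
    evalD δ a (wronskianDiffPoly δ v) = (wronskian δ (Fin.snoc v a)).det := by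
  rw [evalD, wronskianDiffPoly, RingHom.map_det]
  congr 1
  ext i j
  refine Fin.lastCases ?_ (fun j => ?_) j <;> simp [wronskian]

theorem wronskianDiffPoly_mem_supported (δ : Derivation ℤ K K) {n : ℕ} (v : Fin n → K) :
    wronskianDiffPoly δ v ∈ supported K (Set.Iic n) := by
  rw [wronskianDiffPoly, Matrix.det_apply]
  refine Subalgebra.sum_mem _ fun σ _ =>
    Subalgebra.zsmul_mem _ (Subalgebra.prod_mem _ fun i _ => ?_) _
  refine Fin.lastCases ?_ (fun j => ?_) i
  · simpa using Fin.is_le _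
  · simpa using Subalgebra.algebraMap_mem (supported K (Set.Iic n)) ((⇑δ)^[σ j.castSucc] (v j))

theorem wronskianDiffPoly_ne_zero (δ : Derivation ℤ K K) {n : ℕ} {v : Fin n → K}
    (hdet : (wronskian δ v).det ≠ 0) : wronskianDiffPoly δ v ≠ 0 := by
  intro h
  apply hdet
  -- at `x⁽ⁿ⁾ = 1`, `x⁽ⁱ⁾ = 0` for `i < n` the last column is a unit vector
  have := congrArg (eval fun k => if k = n then 1 else 0) h
  rw [wronskianDiffPoly, RingHom.map_det, map_zero, Matrix.det_succ_column _ (Fin.last n),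
    Fintype.sum_eq_single (Fin.last n)] at this
  · simp only [Fin.val_last, Even.add_self, Even.neg_pow, one_pow, RingHom.mapMatrix_apply,
      Matrix.map_apply, Matrix.of_apply, Fin.lastCases_last, eval_X, ↓reduceIte, mul_one,
      Fin.succAbove_last, one_mul] at this
    rw [← this]
    exact congrArg Matrix.det (Matrix.ext fun i j => by simp [wronskian])
  · intro b hb
    simp [show (b : ℕ) ≠ n from fun h => hb (Fin.ext h)]

theorem SDCFAx.exists_det_wronskian_ne_zero {δ : Derivation ℤ K K} (h : SDCFAx δ) (n : ℕ) :
    ∃ v : Fin n → K, (wronskian δ v).det ≠ 0 := by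
  induction n with
  | zero => exact ⟨Fin.elim0, by simp⟩
  | succ n ih =>
    obtain ⟨v, hv⟩ := ih
    obtain ⟨a, -, ha⟩ := h.exists_eval_eq_zero_and_ne_zero (f := X (n + 1))
      (X_mem_supported.mpr (Set.mem_Iic.mpr le_rfl))
      (by simp) (wronskianDiffPoly_mem_supported δ v) (wronskianDiffPoly_ne_zero δ hv)
    exact ⟨Fin.snoc v a, by rwa [← evalD_wronskianDiffPoly]⟩

theorem SDCFAx.exists_linearIndependent {δ : Derivation ℤ K K} (h : SDCFAx δ) (n : ℕ) :
    ∃ v : Fin n → K, LinearIndependent (constants δ) v :=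
  (h.exists_det_wronskian_ne_zero n).imp fun _ => linearIndependent_of_det_wronskian_ne_zero δ

theorem stmt12 {K : Type*} [Field K] (p : ℕ) [Fact p.Prime] [CharP K p]
    (δ : Derivation ℤ K K) (h : SDCFAx δ) :
    IsSepClosed (constants δ) ∧
    ¬ FiniteDimensional ((frobenius (constants δ) p).fieldRange) (constants δ) := by
  refine ⟨isSepClosed_constants h, fun _ => ?_⟩
  obtain ⟨v, hv⟩ := h.exists_linearIndependent
    (Module.finrank (frobenius (constants δ) p).fieldRange (constants δ) + 1)
  have hcard := (linearIndependent_frobenius_fieldRange p (pow_char_mem_constants p δ) hv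
    ).fintype_card_le_finrank
  rw [Fintype.card_fin] at hcard
  omega
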